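/- arXiv:1201.5168 — 2 statements merged into one kernel-verified Lean document; each statement's English description precedes it below -/
import Mathlib

section
/- Let δ ∈ (0, 1/3 − 1/(3√2)) and set β := (1 + 2·log(1−3δ))/(log(1−3δ) − log δ). If T1 and T2 are rooted balanced binary phylogenetic trees on the same leaf-set of cardinality 2^m, then mast{T1, T2} ≥ 2^{β·m}. -/
/-!
# Rooted binary phylogenetic trees

`RTree L` is the type of rooted binary trees with leaves labelled by elements of `L`:
every internal vertex has exactly two children (a left child and a right child), and
a tree with one leaf is a single vertex.
-/

inductive RTree (L : Type) : Type
  | leaf : L → RTree L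
  | node : RTree L → RTree L → RTree L

namespace RTree

variable {L : Type}

/-- The list of leaf labels of a rooted binary tree, read from left to right. -/
def leafList : RTree L → List L
  | leaf b => [b]
  | node l r => leafList l ++ leafList r

/-- The number of leaves of a rooted binary tree. -/
def numLeaves (T : RTree L) : ℕ := T.leafList.length

/-- The set of leaf labels of a rooted binary tree. -/
def leafSet (T : RTree L) : Set L := {b | b ∈ T.leafList}

/-- The height of a rooted binary tree: the maximum distance from the root to a leaf. -/
def height : RTree L → ℕ
  | leaf _ => 0
  | node l r => max (height l) (height r) + 1

/-- A rooted binary tree is balanced if all of its leaves are at the same distance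
from the root. -/
def IsBalanced : RTree L → Prop
  | leaf _ => True
  | node l r => IsBalanced l ∧ IsBalanced r ∧ height l = height r

/-- A rooted binary tree is phylogenetic if its leaves are labelled bijectively by a
finite set, i.e. all leaf labels are distinct. -/
def IsPhylo (T : RTree L) : Prop := T.leafList.Nodup

/-- `Embeds S T` is the subtree relation `S ⪯ T`: there is an injective map `f` from the
vertices of `S` to the vertices of `T` such that `f x = x` for every leaf `x` of `S`
(leaves being identified across trees by their labels) and
`f (x ∧ y) = f x ∧ f y` for all vertices `x`, `y` of `S`, where `∧` denotes the most
recent common ancestor.  Equivalently (for trees with distinct leaf labels), `S` is the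
restriction of `T` to the leaf set of `S`, up to rooted isomorphism; this structural
characterization is taken as the definition. -/
inductive Embeds : RTree L → RTree L → Prop
  | leaf (b : L) : Embeds (RTree.leaf b) (RTree.leaf b)
  | left {S l r : RTree L} : Embeds S l → Embeds S (RTree.node l r)
  | right {S l r : RTree L} : Embeds S r → Embeds S (RTree.node l r)
  | pair {s₁ s₂ l r : RTree L} :
      Embeds s₁ l → Embeds s₂ r → Embeds (RTree.node s₁ s₂) (RTree.node l r)
  | pair_swap {s₁ s₂ l r : RTree L} :
      Embeds s₁ r → Embeds s₂ l → Embeds (RTree.node s₁ s₂) (RTree.node l r)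

/-- `mast T₁ T₂` is the maximum cardinality of a subset `X ⊆ L(T₁) ∩ L(T₂)` such that
the restrictions `T₁|X` and `T₂|X` are isomorphic; equivalently, the maximum number of
leaves of a rooted binary phylogenetic tree `S` with `S ⪯ T₁` and `S ⪯ T₂`. -/
noncomputable def mast (T₁ T₂ : RTree L) : ℕ :=
  sSup {n | ∃ S : RTree L, S.IsPhylo ∧ Embeds S T₁ ∧ Embeds S T₂ ∧ S.numLeaves = n}

end RTree

/-!
Write `c(T₁, T₂)` for the number of common leaves and `h(T)` for the height.  By induction
on the trees, `c(T₁, T₂)⁶ ≤ 2^(h(T₁) + h(T₂)) · mast(T₁, T₂)²⁴`.  For `T₁ = A·B` and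
`T₂ = C·D`, the common leaves split into the four counts `c(A,C), c(A,D), c(B,C), c(B,D)`.
Either both counts of one diagonal are at least `c/20`, and two agreement trees for the
diagonal pairs are joined at a new root; or two counts sharing a subtree are below `c/20`,
and one of the pairs `(A, T₂), (B, T₂), (T₁, C), (T₁, D)` keeps `9c/10` common leaves.  The
constants work because `20⁶ ≤ 2²⁶` and `10⁶ ≤ 2 · 9⁶`.  For balanced trees with `2^m`
leaves this gives `mast ≥ 2^(m/6)`, and `β ≤ 1/6` follows from `log x ≤ x - 1` applied at
`1 - 3δ` and at `33δ`.
-/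

namespace RTree

variable {L : Type}

theorem Embeds.subperm {S T : RTree L} (h : Embeds S T) : S.leafList.Subperm T.leafList := by
  induction h with
  | leaf b => exact List.Subperm.refl _
  | left _ ih => exact ih.trans (List.sublist_append_left _ _).subperm
  | right _ ih => exact ih.trans (List.sublist_append_right _ _).subperm
  | pair _ _ ih₁ ih₂ => exact ih₁.append ih₂
  | pair_swap _ _ ih₁ ih₂ => exact (ih₁.append ih₂).trans List.perm_append_comm.subperm

theorem Embeds.numLeaves_le {S T : RTree L} (h : Embeds S T) : S.numLeaves ≤ T.numLeaves :=
  h.subperm.length_le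

theorem embeds_leaf_of_mem {x : L} {T : RTree L} (h : x ∈ T.leafList) :
    Embeds (leaf x) T := by
  induction T with
  | leaf b =>
    obtain rfl : x = b := List.mem_singleton.mp h
    exact Embeds.leaf x
  | node l r ihl ihr =>
    rcases List.mem_append.mp h with h | h
    · exact Embeds.left (ihl h)
    · exact Embeds.right (ihr h)

theorem numLeaves_node (l r : RTree L) : (node l r).numLeaves = l.numLeaves + r.numLeaves :=
  List.length_append

theorem numLeaves_eq_two_pow_height : ∀ {T : RTree L}, T.IsBalanced → T.numLeaves = 2 ^ T.height
  | leaf _, _ => rfl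
  | node l r, ⟨hl, hr, hlr⟩ => by
    rw [numLeaves_node, numLeaves_eq_two_pow_height hl, numLeaves_eq_two_pow_height hr, height,
      hlr, max_self, pow_succ, mul_two]

theorem numLeaves_eq_of_leafSet_eq {T₁ T₂ : RTree L} (h₁ : T₁.IsPhylo) (h₂ : T₂.IsPhylo)
    (h : T₁.leafSet = T₂.leafSet) : T₁.numLeaves = T₂.numLeaves :=
  ((List.perm_ext_iff_of_nodup h₁ h₂).mpr fun x => Set.ext_iff.mp h x).length_eq

section CommonLeaves

open scoped Classical

noncomputable def numCommonLeaves (T₁ T₂ : RTree L) : ℕ :=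
  (T₁.leafList.toFinset ∩ T₂.leafList.toFinset).card

theorem numCommonLeaves_comm (T₁ T₂ : RTree L) :
    numCommonLeaves T₁ T₂ = numCommonLeaves T₂ T₁ := by
  rw [numCommonLeaves, numCommonLeaves, Finset.inter_comm]

theorem numCommonLeaves_node_left {A B : RTree L} (h : (node A B).IsPhylo) (T : RTree L) :
    numCommonLeaves (node A B) T = numCommonLeaves A T + numCommonLeaves B T := by
  have hAB := List.disjoint_toFinset_iff_disjoint.mpr (List.disjoint_of_nodup_append h)
  rw [numCommonLeaves, leafList, List.toFinset_append, Finset.union_inter_distrib_right,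
    Finset.card_union_of_disjoint (hAB.mono Finset.inter_subset_left Finset.inter_subset_left)]
  rfl

theorem numCommonLeaves_node_right {C D : RTree L} (h : (node C D).IsPhylo) (T : RTree L) :
    numCommonLeaves T (node C D) = numCommonLeaves T C + numCommonLeaves T D := by
  simp only [numCommonLeaves_comm T, numCommonLeaves_node_left h]

theorem numCommonLeaves_le_numLeaves (T₁ T₂ : RTree L) :
    numCommonLeaves T₁ T₂ ≤ T₁.numLeaves :=
  (Finset.card_le_card Finset.inter_subset_left).trans (List.toFinset_card_le _)

theorem numCommonLeaves_eq_numLeaves {T₁ T₂ : RTree L} (h₁ : T₁.IsPhylo)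
    (h : T₁.leafSet ⊆ T₂.leafSet) : numCommonLeaves T₁ T₂ = T₁.numLeaves := by
  rw [numCommonLeaves, Finset.inter_eq_left.mpr fun x hx => List.mem_toFinset.mpr
    (h (List.mem_toFinset.mp hx)), List.toFinset_card_of_nodup h₁]
  rfl

theorem exists_mem_of_numCommonLeaves_pos {T₁ T₂ : RTree L} (h : 0 < numCommonLeaves T₁ T₂) :
    ∃ x, x ∈ T₁.leafList ∧ x ∈ T₂.leafList := by
  obtain ⟨x, hx⟩ := Finset.card_pos.mp h
  rw [Finset.mem_inter, List.mem_toFinset, List.mem_toFinset] at hx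
  exact ⟨x, hx⟩

end CommonLeaves

theorem bddAbove_mast {T₁ T₂ : RTree L} :
    BddAbove {n | ∃ S : RTree L, S.IsPhylo ∧ Embeds S T₁ ∧ Embeds S T₂ ∧ S.numLeaves = n} :=
  ⟨T₁.numLeaves, fun _ ⟨_, _, h, _, hn⟩ => hn ▸ h.numLeaves_le⟩

theorem le_mast {S T₁ T₂ : RTree L} (hS : S.IsPhylo) (h₁ : Embeds S T₁) (h₂ : Embeds S T₂) :
    S.numLeaves ≤ mast T₁ T₂ :=
  le_csSup bddAbove_mast ⟨S, hS, h₁, h₂, rfl⟩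

theorem one_le_mast {T₁ T₂ : RTree L} (h : 0 < numCommonLeaves T₁ T₂) : 1 ≤ mast T₁ T₂ :=
  have ⟨x, h₁, h₂⟩ := exists_mem_of_numCommonLeaves_pos h
  le_mast (S := leaf x) (List.nodup_singleton x) (embeds_leaf_of_mem h₁) (embeds_leaf_of_mem h₂)

theorem exists_numLeaves_eq_mast {T₁ T₂ : RTree L} (h : 0 < numCommonLeaves T₁ T₂) :
    ∃ S : RTree L, S.IsPhylo ∧ Embeds S T₁ ∧ Embeds S T₂ ∧ S.numLeaves = mast T₁ T₂ := by
  obtain ⟨x, h₁, h₂⟩ := exists_mem_of_numCommonLeaves_pos h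
  refine Nat.sSup_mem ?_ bddAbove_mast
  exact ⟨1, leaf x, List.nodup_singleton x, embeds_leaf_of_mem h₁, embeds_leaf_of_mem h₂, rfl⟩

theorem mast_mono {T₁ T₂ U₁ U₂ : RTree L} (h₁ : ∀ S, Embeds S T₁ → Embeds S U₁)
    (h₂ : ∀ S, Embeds S T₂ → Embeds S U₂) : mast T₁ T₂ ≤ mast U₁ U₂ := by
  rcases Set.eq_empty_or_nonempty
    {n | ∃ S : RTree L, S.IsPhylo ∧ Embeds S T₁ ∧ Embeds S T₂ ∧ S.numLeaves = n} with he | hne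
  · rw [mast, he, csSup_empty]
    exact Nat.zero_le _
  · exact csSup_le_csSup bddAbove_mast hne fun _ ⟨S, hS, hS₁, hS₂, hn⟩ =>
      ⟨S, hS, h₁ S hS₁, h₂ S hS₂, hn⟩

theorem mast_add_mast_le {A B C D T : RTree L} (hAB : (node A B).IsPhylo)
    (hAC : 0 < numCommonLeaves A C) (hBD : 0 < numCommonLeaves B D)
    (hpair : ∀ {S₁ S₂}, Embeds S₁ C → Embeds S₂ D → Embeds (node S₁ S₂) T) :
    mast A C + mast B D ≤ mast (node A B) T := by
  obtain ⟨S₁, hS₁, hS₁A, hS₁C, hn₁⟩ := exists_numLeaves_eq_mast hAC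
  obtain ⟨S₂, hS₂, hS₂B, hS₂D, hn₂⟩ := exists_numLeaves_eq_mast hBD
  have hS : (node S₁ S₂).IsPhylo :=
    List.nodup_append'.mpr ⟨hS₁, hS₂, fun z hz₁ hz₂ =>
      List.disjoint_of_nodup_append hAB (hS₁A.subperm.subset hz₁) (hS₂B.subperm.subset hz₂)⟩
  rw [← hn₁, ← hn₂, ← numLeaves_node]
  exact le_mast hS (Embeds.pair hS₁A hS₂B) (hpair hS₁C hS₂D)

theorem height_left_lt (l r : RTree L) : l.height < (node l r).height :=
  Nat.lt_succ_of_le (le_max_left _ _)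

theorem height_right_lt (l r : RTree L) : r.height < (node l r).height :=
  Nat.lt_succ_of_le (le_max_right _ _)

theorem numCommonLeaves_pow_six_le_of_le_one {T₁ T₂ : RTree L} (h : numCommonLeaves T₁ T₂ ≤ 1)
    (k : ℕ) : numCommonLeaves T₁ T₂ ^ 6 ≤ 2 ^ k * mast T₁ T₂ ^ 24 := by
  rcases Nat.le_one_iff_eq_zero_or_eq_one.mp h with h0 | h1
  · simp [h0]
  · rw [h1, one_pow]
    exact one_le_mul Nat.one_le_two_pow (one_le_pow₀ (one_le_mast (h1 ▸ Nat.one_pos)))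

theorem pow_six_le_of_diagonal {n c₁ c₂ x y k : ℕ} (h₁ : n ≤ 20 * c₁) (h₂ : n ≤ 20 * c₂)
    (hx : c₁ ^ 6 ≤ 2 ^ k * x ^ 24) (hy : c₂ ^ 6 ≤ 2 ^ k * y ^ 24) :
    n ^ 6 ≤ 2 ^ (k + 2) * (x + y) ^ 24 := by
  have hmin : n ^ 6 ≤ 20 ^ 6 * (2 ^ k * min x y ^ 24) := by
    rcases min_choice x y with h | h <;> rw [h]
    · exact (Nat.pow_le_pow_left h₁ 6).trans (by rw [mul_pow]; gcongr)
    · exact (Nat.pow_le_pow_left h₂ 6).trans (by rw [mul_pow]; gcongr)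
  calc n ^ 6 ≤ 20 ^ 6 * (2 ^ k * min x y ^ 24) := hmin
    _ ≤ 2 ^ 26 * (2 ^ k * min x y ^ 24) := Nat.mul_le_mul_right _ (by norm_num)
    _ = 2 ^ (k + 2) * (2 * min x y) ^ 24 := by ring
    _ ≤ 2 ^ (k + 2) * (x + y) ^ 24 := by gcongr; omega

theorem pow_six_le_of_bulk {n c x k : ℕ} (h : 9 * n ≤ 10 * c) (hx : c ^ 6 ≤ 2 ^ k * x ^ 24) :
    n ^ 6 ≤ 2 ^ (k + 1) * x ^ 24 := by
  refine Nat.le_of_mul_le_mul_left ?_ (by norm_num : 0 < 9 ^ 6)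
  calc 9 ^ 6 * n ^ 6 = (9 * n) ^ 6 := by ring
    _ ≤ (10 * c) ^ 6 := Nat.pow_le_pow_left h 6
    _ = 10 ^ 6 * c ^ 6 := by ring
    _ ≤ 10 ^ 6 * (2 ^ k * x ^ 24) := by gcongr
    _ ≤ 9 ^ 6 * 2 * (2 ^ k * x ^ 24) := Nat.mul_le_mul_right _ (by norm_num)
    _ = 9 ^ 6 * (2 ^ (k + 1) * x ^ 24) := by ring

theorem quadrant_cases {n a b c d : ℕ} (hn : n = a + b + (c + d)) :
    (n ≤ 20 * a ∧ n ≤ 20 * d) ∨ (n ≤ 20 * b ∧ n ≤ 20 * c) ∨ 9 * n ≤ 10 * (c + d) ∨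
      9 * n ≤ 10 * (b + d) ∨ 9 * n ≤ 10 * (a + c) ∨ 9 * n ≤ 10 * (a + b) := by
  omega

theorem numCommonLeaves_node_pow_six_le {A B C D : RTree L} {j : ℕ}
    (h₁ : (node A B).IsPhylo) (h₂ : (node C D).IsPhylo)
    (hk : (node A B).height + (node C D).height ≤ j + 2)
    (IH : ∀ i < j + 2, ∀ {T₁ T₂ : RTree L}, T₁.IsPhylo → T₂.IsPhylo →
      T₁.height + T₂.height ≤ i → numCommonLeaves T₁ T₂ ^ 6 ≤ 2 ^ i * mast T₁ T₂ ^ 24) :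
    numCommonLeaves (node A B) (node C D) ^ 6 ≤ 2 ^ (j + 2) * mast (node A B) (node C D) ^ 24 := by
  rcases le_or_gt (numCommonLeaves (node A B) (node C D)) 1 with hle | hpos
  · exact numCommonLeaves_pow_six_le_of_le_one hle _
  obtain ⟨hA, hB, -⟩ : A.IsPhylo ∧ B.IsPhylo ∧ _ := List.nodup_append'.mp h₁
  obtain ⟨hC, hD, -⟩ : C.IsPhylo ∧ D.IsPhylo ∧ _ := List.nodup_append'.mp h₂
  have := height_left_lt A B; have := height_right_lt A B
  have := height_left_lt C D; have := height_right_lt C D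
  have hn : numCommonLeaves (node A B) (node C D) = numCommonLeaves A C + numCommonLeaves A D +
      (numCommonLeaves B C + numCommonLeaves B D) := by
    rw [numCommonLeaves_node_left h₁, numCommonLeaves_node_right h₂, numCommonLeaves_node_right h₂]
  have hTC := numCommonLeaves_node_left h₁ C
  have hTD := numCommonLeaves_node_left h₁ D
  have hAT := numCommonLeaves_node_right h₂ A
  have hBT := numCommonLeaves_node_right h₂ B
  rcases quadrant_cases hn with ⟨hAC, hBD⟩ | ⟨hAD, hBC⟩ | hB' | hD' | hC' | hA'
  · refine (pow_six_le_of_diagonal hAC hBD (IH j (by omega) hA hC (by omega))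
      (IH j (by omega) hB hD (by omega))).trans ?_
    gcongr
    exact mast_add_mast_le h₁ (by omega) (by omega) Embeds.pair
  · refine (pow_six_le_of_diagonal hAD hBC (IH j (by omega) hA hD (by omega))
      (IH j (by omega) hB hC (by omega))).trans ?_
    gcongr
    exact mast_add_mast_le h₁ (by omega) (by omega) Embeds.pair_swap
  · refine (pow_six_le_of_bulk (by omega) (IH (j + 1) (by omega) hB h₂ (by omega))).trans ?_
    gcongr
    exact mast_mono (fun _ => Embeds.right) fun _ => id
  · refine (pow_six_le_of_bulk (by omega) (IH (j + 1) (by omega) h₁ hD (by omega))).trans ?_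
    gcongr
    exact mast_mono (fun _ => id) fun _ => Embeds.right
  · refine (pow_six_le_of_bulk (by omega) (IH (j + 1) (by omega) h₁ hC (by omega))).trans ?_
    gcongr
    exact mast_mono (fun _ => id) fun _ => Embeds.left
  · refine (pow_six_le_of_bulk (by omega) (IH (j + 1) (by omega) hA h₂ (by omega))).trans ?_
    gcongr
    exact mast_mono (fun _ => Embeds.left) fun _ => id

theorem numCommonLeaves_pow_six_le (k : ℕ) : ∀ {T₁ T₂ : RTree L}, T₁.IsPhylo → T₂.IsPhylo →
    T₁.height + T₂.height ≤ k → numCommonLeaves T₁ T₂ ^ 6 ≤ 2 ^ k * mast T₁ T₂ ^ 24 := by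
  induction k using Nat.strong_induction_on with
  | _ k IH =>
  intro T₁ T₂ h₁ h₂ hk
  cases T₁ with
  | leaf _ => exact numCommonLeaves_pow_six_le_of_le_one (numCommonLeaves_le_numLeaves _ _) k
  | node A B =>
  cases T₂ with
  | leaf _ =>
    exact numCommonLeaves_pow_six_le_of_le_one
      ((numCommonLeaves_comm _ _).trans_le (numCommonLeaves_le_numLeaves _ _)) k
  | node C D =>
    obtain ⟨j, rfl⟩ : ∃ j, k = j + 2 :=
      ⟨k - 2, by have := height_left_lt A B; have := height_left_lt C D; omega⟩
    exact numCommonLeaves_node_pow_six_le h₁ h₂ hk IH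

theorem two_pow_le_mast_pow_of_isBalanced {T₁ T₂ : RTree L} {m : ℕ} (h₁ : T₁.IsPhylo)
    (h₂ : T₂.IsPhylo) (hbal₁ : T₁.IsBalanced) (hbal₂ : T₂.IsBalanced)
    (hL : T₁.leafSet = T₂.leafSet) (hcard : T₁.numLeaves = 2 ^ m) :
    2 ^ (4 * m) ≤ mast T₁ T₂ ^ 24 := by
  have hh₁ : T₁.height = m :=
    Nat.pow_right_injective le_rfl ((numLeaves_eq_two_pow_height hbal₁).symm.trans hcard)
  have hh₂ : T₂.height = m := Nat.pow_right_injective le_rfl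
    ((numLeaves_eq_two_pow_height hbal₂).symm.trans
      ((numLeaves_eq_of_leafSet_eq h₁ h₂ hL).symm.trans hcard))
  have hc : numCommonLeaves T₁ T₂ = 2 ^ m :=
    (numCommonLeaves_eq_numLeaves h₁ hL.subset).trans hcard
  have h := numCommonLeaves_pow_six_le _ h₁ h₂ le_rfl
  rw [hc, hh₁, hh₂, ← pow_mul, show m * 6 = (m + m) + 4 * m by ring, pow_add] at h
  exact Nat.le_of_mul_le_mul_left h (by positivity)

end RTree

open Real in
theorem beta_le_one_sixth {δ : ℝ} (h₀ : 0 < δ) (h₁ : δ < 1 / 4) :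
    (1 + 2 * logb 2 (1 - 3 * δ)) / (logb 2 (1 - 3 * δ) - logb 2 δ) ≤ 1 / 6 := by
  have hε : 0 < 1 - 3 * δ := by linarith
  have hU : log (1 - 3 * δ) ≤ -(3 * δ) := by linarith [log_le_sub_one_of_pos hε]
  have hV : log 33 + log δ ≤ 33 * δ - 1 := by
    rw [← log_mul (by norm_num) h₀.ne']
    exact log_le_sub_one_of_pos (by positivity)
  have h64 : log 64 - log 33 ≤ 64 / 33 - 1 := by
    rw [← log_div (by norm_num) (by norm_num)]
    exact log_le_sub_one_of_pos (by norm_num)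
  have hlog64 : log 64 = 6 * log 2 := by
    rw [show (64 : ℝ) = 2 ^ 6 by norm_num, log_pow]
    norm_num
  have hden : 0 < log (1 - 3 * δ) - log δ := sub_pos.mpr (log_lt_log h₀ (by linarith))
  have hlog2 : 0 < log 2 := log_pos one_lt_two
  have hβ : (1 + 2 * logb 2 (1 - 3 * δ)) / (logb 2 (1 - 3 * δ) - logb 2 δ) =
      (log 2 + 2 * log (1 - 3 * δ)) / (log (1 - 3 * δ) - log δ) := by
    rw [logb, logb]
    field_simp
  rw [hβ, div_le_iff₀ hden]
  linarith

/-- Let `δ ∈ (0, 1/3 - 1/(3√2))` and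
`β := (1 + 2·log(1-3δ))/(log(1-3δ) - log δ)`.  If `T₁`, `T₂` are rooted balanced binary
phylogenetic trees on the same leaf set of cardinality `2^m`, then
`mast{T₁,T₂} ≥ 2^{β·m}` (logarithms base 2). -/
theorem stmt_13 {L : Type} (m : ℕ) (T₁ T₂ : RTree L) (δ : ℝ)
    (hδ : δ ∈ Set.Ioo (0 : ℝ) (1/3 - 1/(3 * Real.sqrt 2)))
    (h₁ : T₁.IsPhylo) (h₂ : T₂.IsPhylo)
    (hbal₁ : T₁.IsBalanced) (hbal₂ : T₂.IsBalanced)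
    (hL : T₁.leafSet = T₂.leafSet) (hcard : T₁.numLeaves = 2 ^ m) :
    (2 : ℝ) ^ ((1 + 2 * Real.logb 2 (1 - 3 * δ)) /
        (Real.logb 2 (1 - 3 * δ) - Real.logb 2 δ) * m)
      ≤ (RTree.mast T₁ T₂ : ℝ) := by
  obtain ⟨hδ₀, hδ₁⟩ := hδ
  have hδ : δ < 1 / 4 := by
    have : Real.sqrt 2 < 4 := (Real.sqrt_lt' (by norm_num)).mpr (by norm_num)
    have : (1 : ℝ) / 12 < 1 / (3 * Real.sqrt 2) := by
      rw [one_div_lt_one_div (by norm_num) (by positivity)]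
      linarith
    linarith
  have hmast : (2 : ℝ) ^ (4 * m) ≤ (RTree.mast T₁ T₂ : ℝ) ^ 24 := by
    exact_mod_cast RTree.two_pow_le_mast_pow_of_isBalanced h₁ h₂ hbal₁ hbal₂ hL hcard
  calc (2 : ℝ) ^ ((1 + 2 * Real.logb 2 (1 - 3 * δ)) /
        (Real.logb 2 (1 - 3 * δ) - Real.logb 2 δ) * m)
      ≤ 2 ^ ((1 / 6 : ℝ) * m) := Real.rpow_le_rpow_of_exponent_le one_le_two
        (mul_le_mul_of_nonneg_right (beta_le_one_sixth hδ₀ hδ) m.cast_nonneg)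
    _ ≤ RTree.mast T₁ T₂ := by
      rw [← pow_le_pow_iff_left₀ (by positivity) (by positivity) (by norm_num : 24 ≠ 0),
        ← Real.rpow_mul_natCast zero_le_two, show (1 / 6 : ℝ) * m * (24 : ℕ) = (4 * m : ℕ) by
          push_cast; ring, Real.rpow_natCast]
      exact hmast
end

section
/- For every integer k > 0, let T1 be the unrooted binary phylogenetic tree obtained by suppressing the root (replacing the two edges at the root by a single edge) of the rooted balanced binary tree of height 2k whose leaves from left to right are labelled 1, 2, …, 4^k, and let T2 be obtained in the same way from the rooted balanced binary tree of height 2k whose leaves from left to right are labelled by swap(1, 2, …, 4^k). Then T1 and T2 have no agreement subtree with more than 3·2^{k−1} leaves, i.e., mast{T1, T2} ≤ 3·2^{k−1}. -/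
/-!
# Unrooted binary phylogenetic trees, via rooted representatives

An unrooted binary phylogenetic tree (all internal vertices of degree 3) with at least
two leaves is represented by any rooted binary tree obtained from it by subdividing an
edge and rooting there; conversely, suppressing the (degree-2) root of a rooted binary
tree yields an unrooted one.  Two rooted trees represent the same unrooted tree (i.e.
the unrooted trees are isomorphic by a graph isomorphism fixing every leaf label) iff
they are related by the equivalence relation `URel` generated by moving the root across
an edge together with (unordered) rooted isomorphism.
-/

namespace RTree

variable {L : Type}

/-- Rooted isomorphism of rooted binary trees, fixing all leaf labels (the two children
of a vertex are unordered). -/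
inductive RIso : RTree L → RTree L → Prop
  | leaf (b : L) : RIso (RTree.leaf b) (RTree.leaf b)
  | pair {a b c d : RTree L} :
      RIso a c → RIso b d → RIso (RTree.node a b) (RTree.node c d)
  | pair_swap {a b c d : RTree L} :
      RIso a d → RIso b c → RIso (RTree.node a b) (RTree.node c d)

/-- Moving the root of a rooted binary tree across one edge of the underlying unrooted
tree: this does not change the unrooted tree obtained by suppressing the root. -/
inductive RootMove : RTree L → RTree L → Prop
  | assoc (a b c : RTree L) :
      RootMove (RTree.node a (RTree.node b c)) (RTree.node (RTree.node a b) c)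

/-- `URel S T` holds iff the unrooted binary trees obtained from `S` and `T` by
suppressing their roots are isomorphic by a graph isomorphism fixing every leaf label. -/
def URel (S T : RTree L) : Prop :=
  Relation.EqvGen (fun X Y => RootMove X Y ∨ RIso X Y) S T

/-- `umast T₁ T₂` is the maximum agreement subtree size of the *unrooted* binary
phylogenetic trees represented by `T₁` and `T₂`: the maximum cardinality of a set
`X ⊆ L(T₁) ∩ L(T₂)` such that the unrooted restrictions `T₁|X` and `T₂|X` are
isomorphic (fixing leaf labels).  Equivalently, the maximum number of leaves of a
common unrooted subtree, given here by a pair of rooted representatives. -/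
noncomputable def umast (T₁ T₂ : RTree L) : ℕ :=
  sSup {n | ∃ S₁ S₂ : RTree L, S₁.IsPhylo ∧ S₂.IsPhylo ∧
    Embeds S₁ T₁ ∧ Embeds S₂ T₂ ∧ URel S₁ S₂ ∧ S₁.numLeaves = n}

end RTree

/-- `buildL m S` is the rooted balanced binary tree of height `m` whose `2^m` leaves,
read from left to right, are labelled by the entries of the list `S`. -/
def buildL : ℕ → List ℕ → RTree ℕ
  | 0, S => RTree.leaf S.headI
  | m + 1, S => RTree.node (buildL m (S.take (2 ^ m))) (buildL m (S.drop (2 ^ m)))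

/-- The `swap` operation on sequences of length `4^i`: `swap(S) = S` for a sequence of
length one, and if `S = S₁:S₂:S₃:S₄` is a concatenation of four blocks of length
`4^(i-1)`, then `swap(S) = swap(S₁):swap(S₃):swap(S₂):swap(S₄)`. -/
def swapList : ℕ → List ℕ → List ℕ
  | 0, S => S
  | i + 1, S =>
      swapList i (S.take (4 ^ i)) ++
      swapList i (((S.drop (4 ^ i)).drop (4 ^ i)).take (4 ^ i)) ++
      swapList i ((S.drop (4 ^ i)).take (4 ^ i)) ++
      swapList i (((S.drop (4 ^ i)).drop (4 ^ i)).drop (4 ^ i))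

/-!
If `S₁ ⪯ T₁`, `S₂ ⪯ T₂` and `S₁`, `S₂` represent the same unrooted tree, then `T₁` and `T₂`
display the same quartets `ab|cd` on `X = L(S₁)`: embeddings, root moves and rooted
isomorphisms all preserve the splits induced on the leaves.

Both trees are balanced trees over four blocks of `4^(k-1)` leaves, grouped `12|34` in `T₁`
and `13|24` in `T₂`, the blocks being again such a pair of trees.  A quartet with one leaf in
each block tells them apart, so `X` misses a block.  If `X` meets at least two blocks, a leaf
`d` outside a block turns every rooted triple `ab|c` inside the block into the quartet `ab|cd`,
so the two block trees display the same rooted triples on that part of `X`.  Agreement on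
rooted triples allows at most `2^(k-1)` leaves, by the same argument one level down: three of
the four sub-blocks would give a triple `ab|c` with `a`, `b` in sibling sub-blocks of one tree
but separated at the root of the other.  Hence `|X| ≤ 3·2^(k-1)`, or `X` lies in one block and
induction applies.
-/

open scoped Finset

namespace RTree

variable {L : Type}

@[simp] theorem leafSet_node (l r : RTree L) :
    (node l r).leafSet = l.leafSet ∪ r.leafSet := by
  ext; simp [leafSet, leafList]

theorem isPhylo_node {l r : RTree L} :
    (node l r).IsPhylo ↔ l.IsPhylo ∧ r.IsPhylo ∧ Disjoint l.leafSet r.leafSet := by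
  simp only [IsPhylo, leafList, List.nodup_append, Set.disjoint_left]
  exact and_congr_right' <| and_congr_right' <|
    forall₂_congr fun a _ => ⟨fun h hb => h a hb rfl, fun h b hb hab => h (hab ▸ hb)⟩

theorem Embeds.leafSet_subset {S T : RTree L} (h : Embeds S T) : S.leafSet ⊆ T.leafSet := by
  induction h with
  | leaf => rfl
  | left _ ih => simpa using Set.subset_union_of_subset_left ih _
  | right _ ih => simpa using Set.subset_union_of_subset_right ih _
  | pair _ _ ih₁ ih₂ => simpa using Set.union_subset_union ih₁ ih₂
  | pair_swap _ _ ih₁ ih₂ => simpa [Set.union_comm] using Set.union_subset_union ih₂ ih₁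

theorem Embeds.refl : ∀ T : RTree L, Embeds T T
  | RTree.leaf b => .leaf b
  | RTree.node l r => .pair (Embeds.refl l) (Embeds.refl r)

inductive IsSubtree : RTree L → RTree L → Prop
  | refl (T : RTree L) : IsSubtree T T
  | left {t l r : RTree L} : IsSubtree t l → IsSubtree t (node l r)
  | right {t l r : RTree L} : IsSubtree t r → IsSubtree t (node l r)

theorem IsSubtree.trans {t u T : RTree L} (h₁ : IsSubtree t u) (h₂ : IsSubtree u T) :
    IsSubtree t T := by
  induction h₂ with
  | refl => exact h₁
  | left _ ih => exact .left ih
  | right _ ih => exact .right ih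

theorem IsSubtree.embeds {t T : RTree L} (h : IsSubtree t T) : Embeds t T := by
  induction h with
  | refl => exact Embeds.refl _
  | left _ ih => exact .left ih
  | right _ ih => exact .right ih

theorem IsSubtree.leafSet_subset {t T : RTree L} (h : IsSubtree t T) :
    t.leafSet ⊆ T.leafSet :=
  h.embeds.leafSet_subset

theorem IsSubtree.leafSet_subset_or_subset {u v T : RTree L} (hT : T.IsPhylo)
    (hu : IsSubtree u T) (hv : IsSubtree v T) {x : L} (hxu : x ∈ u.leafSet)
    (hxv : x ∈ v.leafSet) : u.leafSet ⊆ v.leafSet ∨ v.leafSet ⊆ u.leafSet := by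
  induction T with
  | leaf b => cases hu; cases hv; exact .inl le_rfl
  | node l r ihl ihr =>
    obtain ⟨hl, hr, hlr⟩ := isPhylo_node.1 hT
    cases hu with
    | refl => exact .inr hv.leafSet_subset
    | left hu =>
      cases hv with
      | refl => exact .inl (IsSubtree.left hu).leafSet_subset
      | left hv => exact ihl hl hu hv
      | right hv =>
        exact (hlr.ne_of_mem (hu.leafSet_subset hxu) (hv.leafSet_subset hxv) rfl).elim
    | right hu =>
      cases hv with
      | refl => exact .inl (IsSubtree.right hu).leafSet_subset
      | left hv =>
        exact (hlr.ne_of_mem (hv.leafSet_subset hxv) (hu.leafSet_subset hxu) rfl).elim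
      | right hv => exact ihr hr hu hv

/-- For `A = {a, b}` and `B = {c}`: `T` displays the rooted triple `ab|c`. -/
def HasClade (T : RTree L) (A B : Set L) : Prop :=
  ∃ t, IsSubtree t T ∧ A ⊆ t.leafSet ∧ Disjoint t.leafSet B

/-- An edge of the unrooted tree underlying `T` separates `A` from `B`: one side of an edge
is the clade below it, the other side its complement. -/
def HasSplit (T : RTree L) (A B : Set L) : Prop :=
  HasClade T A B ∨ HasClade T B A

theorem hasClade_self {T : RTree L} {A B : Set L} (hA : A ⊆ T.leafSet)
    (hB : Disjoint T.leafSet B) : HasClade T A B :=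
  ⟨T, .refl T, hA, hB⟩

theorem HasClade.mono {t T : RTree L} {A B : Set L} (h : IsSubtree t T) :
    HasClade t A B → HasClade T A B
  | ⟨u, hu, hA, hB⟩ => ⟨u, hu.trans h, hA, hB⟩

theorem HasClade.anti_right {T : RTree L} {A B B' : Set L} (hB : B' ⊆ B) :
    HasClade T A B → HasClade T A B'
  | ⟨u, hu, hA, hd⟩ => ⟨u, hu, hA, hd.mono_right hB⟩

/-- A clade containing leaves on both sides of the root is the whole tree. -/
theorem not_hasClade_of_mem_left_of_mem_right {l r : RTree L} (hp : (node l r).IsPhylo)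
    {A B : Set L} {a b c : L} (ha : a ∈ A) (hal : a ∈ l.leafSet) (hb : b ∈ A)
    (hbr : b ∈ r.leafSet) (hc : c ∈ B) (hcT : c ∈ (node l r).leafSet) :
    ¬HasClade (node l r) A B := by
  rintro ⟨t, ht, hA, hB⟩
  have hlr := (isPhylo_node.1 hp).2.2
  cases ht with
  | refl => exact Set.disjoint_left.1 hB hcT hc
  | left ht => exact hlr.ne_of_mem (ht.leafSet_subset (hA hb)) hbr rfl
  | right ht => exact hlr.ne_of_mem hal (ht.leafSet_subset (hA ha)) rfl

theorem Embeds.hasClade_of_hasClade {S T : RTree L} (h : Embeds S T) (hT : T.IsPhylo)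
    {A B : Set L} (hA : A.Nonempty) (hAS : A ⊆ S.leafSet) (hc : HasClade T A B) :
    HasClade S A B := by
  induction h with
  | leaf => exact hc
  | @left S l r hS ih =>
    obtain ⟨hl, -, hlr⟩ := isPhylo_node.1 hT
    obtain ⟨t, ht, htA, htB⟩ := hc
    cases ht with
    | refl => exact hasClade_self hAS (htB.mono_left (Embeds.left (r := r) hS).leafSet_subset)
    | left ht => exact ih hl hAS ⟨t, ht, htA, htB⟩
    | right ht =>
      obtain ⟨a, ha⟩ := hA
      exact (hlr.ne_of_mem (hS.leafSet_subset (hAS ha)) (ht.leafSet_subset (htA ha)) rfl).elim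
  | @right S l r hS ih =>
    obtain ⟨-, hr, hlr⟩ := isPhylo_node.1 hT
    obtain ⟨t, ht, htA, htB⟩ := hc
    cases ht with
    | refl => exact hasClade_self hAS (htB.mono_left (Embeds.right (l := l) hS).leafSet_subset)
    | left ht =>
      obtain ⟨a, ha⟩ := hA
      exact (hlr.ne_of_mem (ht.leafSet_subset (htA ha)) (hS.leafSet_subset (hAS ha)) rfl).elim
    | right ht => exact ih hr hAS ⟨t, ht, htA, htB⟩
  | @pair s₁ s₂ l r h₁ h₂ ih₁ ih₂ =>
    obtain ⟨hl, hr, hlr⟩ := isPhylo_node.1 hT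
    obtain ⟨t, ht, htA, htB⟩ := hc
    rw [leafSet_node] at hAS
    cases ht with
    | refl =>
      exact hasClade_self (by rwa [leafSet_node])
        (htB.mono_left (Embeds.pair h₁ h₂).leafSet_subset)
    | left ht =>
      have hA₁ : A ⊆ s₁.leafSet := fun a ha => (hAS ha).resolve_right fun h =>
        hlr.ne_of_mem (ht.leafSet_subset (htA ha)) (h₂.leafSet_subset h) rfl
      exact (ih₁ hl hA₁ ⟨t, ht, htA, htB⟩).mono (.left (.refl _))
    | right ht =>
      have hA₂ : A ⊆ s₂.leafSet := fun a ha => (hAS ha).resolve_left fun h =>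
        hlr.ne_of_mem (h₁.leafSet_subset h) (ht.leafSet_subset (htA ha)) rfl
      exact (ih₂ hr hA₂ ⟨t, ht, htA, htB⟩).mono (.right (.refl _))
  | @pair_swap s₁ s₂ l r h₁ h₂ ih₁ ih₂ =>
    obtain ⟨hl, hr, hlr⟩ := isPhylo_node.1 hT
    obtain ⟨t, ht, htA, htB⟩ := hc
    rw [leafSet_node] at hAS
    cases ht with
    | refl =>
      exact hasClade_self (by rwa [leafSet_node])
        (htB.mono_left (Embeds.pair_swap h₁ h₂).leafSet_subset)
    | left ht =>
      have hA₂ : A ⊆ s₂.leafSet := fun a ha => (hAS ha).resolve_left fun h =>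
        hlr.ne_of_mem (ht.leafSet_subset (htA ha)) (h₁.leafSet_subset h) rfl
      exact (ih₂ hl hA₂ ⟨t, ht, htA, htB⟩).mono (.right (.refl _))
    | right ht =>
      have hA₁ : A ⊆ s₁.leafSet := fun a ha => (hAS ha).resolve_right fun h =>
        hlr.ne_of_mem (h₂.leafSet_subset h) (ht.leafSet_subset (htA ha)) rfl
      exact (ih₁ hr hA₁ ⟨t, ht, htA, htB⟩).mono (.left (.refl _))

theorem Embeds.hasClade {S T : RTree L} (h : Embeds S T) (hT : T.IsPhylo) {A B : Set L}
    (hBS : B ⊆ S.leafSet) (hc : HasClade S A B) : HasClade T A B := by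
  induction h generalizing B with
  | leaf => exact hc
  | left _ ih => exact (ih (isPhylo_node.1 hT).1 hBS hc).mono (.left (.refl _))
  | right _ ih => exact (ih (isPhylo_node.1 hT).2.1 hBS hc).mono (.right (.refl _))
  | @pair s₁ s₂ l r h₁ h₂ ih₁ ih₂ =>
    obtain ⟨hl, hr, hlr⟩ := isPhylo_node.1 hT
    obtain ⟨t, ht, htA, htB⟩ := hc
    rw [leafSet_node] at hBS
    cases ht with
    | refl =>
      refine hasClade_self ((htA.trans (Embeds.pair h₁ h₂).leafSet_subset)) ?_
      exact Set.disjoint_right.2 fun x hx _ => Set.disjoint_right.1 htB hx (by simpa using hBS hx)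
    | left ht =>
      obtain ⟨u, hu, huA, huB⟩ :=
        ih₁ hl Set.inter_subset_right ⟨t, ht, htA, htB.mono_right Set.inter_subset_left⟩
      refine ⟨u, .left hu, huA, Set.disjoint_left.2 fun x hxu hxB => ?_⟩
      exact (hBS hxB).elim (fun hx => Set.disjoint_left.1 huB hxu ⟨hxB, hx⟩)
        (fun hx => hlr.ne_of_mem (hu.leafSet_subset hxu) (h₂.leafSet_subset hx) rfl)
    | right ht =>
      obtain ⟨u, hu, huA, huB⟩ :=
        ih₂ hr Set.inter_subset_right ⟨t, ht, htA, htB.mono_right Set.inter_subset_left⟩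
      refine ⟨u, .right hu, huA, Set.disjoint_left.2 fun x hxu hxB => ?_⟩
      exact (hBS hxB).elim
        (fun hx => hlr.ne_of_mem (h₁.leafSet_subset hx) (hu.leafSet_subset hxu) rfl)
        (fun hx => Set.disjoint_left.1 huB hxu ⟨hxB, hx⟩)
  | @pair_swap s₁ s₂ l r h₁ h₂ ih₁ ih₂ =>
    obtain ⟨hl, hr, hlr⟩ := isPhylo_node.1 hT
    obtain ⟨t, ht, htA, htB⟩ := hc
    rw [leafSet_node] at hBS
    cases ht with
    | refl =>
      refine hasClade_self ((htA.trans (Embeds.pair_swap h₁ h₂).leafSet_subset)) ?_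
      exact Set.disjoint_right.2 fun x hx _ => Set.disjoint_right.1 htB hx (by simpa using hBS hx)
    | left ht =>
      obtain ⟨u, hu, huA, huB⟩ :=
        ih₁ hr Set.inter_subset_right ⟨t, ht, htA, htB.mono_right Set.inter_subset_left⟩
      refine ⟨u, .right hu, huA, Set.disjoint_left.2 fun x hxu hxB => ?_⟩
      exact (hBS hxB).elim (fun hx => Set.disjoint_left.1 huB hxu ⟨hxB, hx⟩)
        (fun hx => hlr.ne_of_mem (h₂.leafSet_subset hx) (hu.leafSet_subset hxu) rfl)
    | right ht =>
      obtain ⟨u, hu, huA, huB⟩ :=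
        ih₂ hl Set.inter_subset_right ⟨t, ht, htA, htB.mono_right Set.inter_subset_left⟩
      refine ⟨u, .left hu, huA, Set.disjoint_left.2 fun x hxu hxB => ?_⟩
      exact (hBS hxB).elim
        (fun hx => hlr.ne_of_mem (hu.leafSet_subset hxu) (h₁.leafSet_subset hx) rfl)
        (fun hx => Set.disjoint_left.1 huB hxu ⟨hxB, hx⟩)

theorem Embeds.hasClade_iff {S T : RTree L} (h : Embeds S T) (hT : T.IsPhylo)
    {A B : Set L} (hA : A.Nonempty) (hAS : A ⊆ S.leafSet) (hBS : B ⊆ S.leafSet) :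
    HasClade S A B ↔ HasClade T A B :=
  ⟨h.hasClade hT hBS, h.hasClade_of_hasClade hT hA hAS⟩

theorem Embeds.hasSplit_iff {S T : RTree L} (h : Embeds S T) (hT : T.IsPhylo)
    {A B : Set L} (hA : A.Nonempty) (hB : B.Nonempty) (hAS : A ⊆ S.leafSet)
    (hBS : B ⊆ S.leafSet) : HasSplit S A B ↔ HasSplit T A B :=
  or_congr (h.hasClade_iff hT hA hAS hBS) (h.hasClade_iff hT hB hBS hAS)

theorem leafSet_eq_of_perm {S T : RTree L} (h : S.leafList.Perm T.leafList) :
    S.leafSet = T.leafSet :=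
  Set.ext fun _ => h.mem_iff

theorem RIso.perm {S T : RTree L} (h : RIso S T) : S.leafList.Perm T.leafList := by
  induction h with
  | leaf => rfl
  | pair _ _ ih₁ ih₂ => exact ih₁.append ih₂
  | pair_swap _ _ ih₁ ih₂ => exact (ih₁.append ih₂).trans List.perm_append_comm

theorem RIso.exists_subtree {S S' : RTree L} (h : RIso S S') {t : RTree L}
    (ht : IsSubtree t S) : ∃ t', IsSubtree t' S' ∧ t'.leafSet = t.leafSet := by
  induction h generalizing t with
  | leaf b => cases ht; exact ⟨_, .refl _, rfl⟩
  | pair h₁ h₂ ih₁ ih₂ =>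
    cases ht with
    | refl => exact ⟨_, .refl _, (leafSet_eq_of_perm (RIso.pair h₁ h₂).perm).symm⟩
    | left ht => obtain ⟨u, hu, e⟩ := ih₁ ht; exact ⟨u, .left hu, e⟩
    | right ht => obtain ⟨u, hu, e⟩ := ih₂ ht; exact ⟨u, .right hu, e⟩
  | pair_swap h₁ h₂ ih₁ ih₂ =>
    cases ht with
    | refl => exact ⟨_, .refl _, (leafSet_eq_of_perm (RIso.pair_swap h₁ h₂).perm).symm⟩
    | left ht => obtain ⟨u, hu, e⟩ := ih₁ ht; exact ⟨u, .right hu, e⟩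
    | right ht => obtain ⟨u, hu, e⟩ := ih₂ ht; exact ⟨u, .left hu, e⟩

theorem RIso.symm {S T : RTree L} (h : RIso S T) : RIso T S := by
  induction h with
  | leaf b => exact .leaf b
  | pair _ _ ih₁ ih₂ => exact .pair ih₁ ih₂
  | pair_swap _ _ ih₁ ih₂ => exact .pair_swap ih₂ ih₁

theorem RootMove.leafList_eq {S T : RTree L} (h : RootMove S T) : S.leafList = T.leafList := by
  cases h; simp [leafList]

theorem URel.perm {S T : RTree L} (h : URel S T) : S.leafList.Perm T.leafList := by
  induction h with
  | rel _ _ h => exact h.elim (fun h => .of_eq h.leafList_eq) RIso.perm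
  | refl => rfl
  | symm _ _ _ ih => exact ih.symm
  | trans _ _ _ _ _ ih₁ ih₂ => exact ih₁.trans ih₂

theorem HasSplit.of_forall_isSubtree {S S' : RTree L}
    (h : ∀ t, IsSubtree t S → ∃ t', IsSubtree t' S' ∧
      (t'.leafSet = t.leafSet ∨ t'.leafSet = S.leafSet \ t.leafSet))
    {A B : Set L} (hA : A ⊆ S.leafSet) (hB : B ⊆ S.leafSet) (hs : HasSplit S A B) :
    HasSplit S' A B := by
  have key : ∀ {A B : Set L}, B ⊆ S.leafSet → HasClade S A B → HasSplit S' A B := by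
    rintro A B hB ⟨t, ht, htA, htB⟩
    obtain ⟨t', ht', e | e⟩ := h t ht
    · exact .inl ⟨t', ht', e ▸ htA, e ▸ htB⟩
    · refine .inr ⟨t', ht', fun x hx => e ▸ ⟨hB hx, Set.disjoint_right.1 htB hx⟩, ?_⟩
      exact e ▸ Set.disjoint_sdiff_left.mono_right htA
  exact hs.elim (key hB) fun hs => (key hA hs).symm

theorem RIso.hasSplit {S S' : RTree L} (h : RIso S S') {A B : Set L} (hA : A ⊆ S.leafSet)
    (hB : B ⊆ S.leafSet) (hs : HasSplit S A B) : HasSplit S' A B :=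
  hs.of_forall_isSubtree
    (fun _ ht => (h.exists_subtree ht).imp fun _ ⟨ht', e⟩ => ⟨ht', .inl e⟩) hA hB

theorem RootMove.hasSplit_iff {S S' : RTree L} (h : RootMove S S') (hS : S.IsPhylo)
    {A B : Set L} (hA : A ⊆ S.leafSet) (hB : B ⊆ S.leafSet) :
    HasSplit S A B ↔ HasSplit S' A B := by
  obtain ⟨a, b, c⟩ := h
  have hS' : (node (node a b) c).IsPhylo := by simpa [IsPhylo, leafList] using hS
  obtain ⟨-, -, habc⟩ := isPhylo_node.1 hS
  obtain ⟨-, -, hab_c⟩ := isPhylo_node.1 hS'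
  have hL : (node a (node b c)).leafSet = (node (node a b) c).leafSet := by
    simp [Set.union_assoc]
  constructor
  · refine HasSplit.of_forall_isSubtree (fun t ht => ?_) hA hB
    rcases ht with _ | ht | ht
    · exact ⟨_, .refl _, .inl hL.symm⟩
    · exact ⟨t, .left (.left ht), .inl rfl⟩
    rcases ht with _ | ht | ht
    · refine ⟨a, .left (.left (.refl a)), .inr ?_⟩
      rw [leafSet_node a, Set.union_sdiff_right, habc.sdiff_eq_left]
    · exact ⟨t, .left (.right ht), .inl rfl⟩
    · exact ⟨t, .right ht, .inl rfl⟩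
  · refine HasSplit.of_forall_isSubtree (fun t ht => ?_) (hL ▸ hA) (hL ▸ hB)
    rcases ht with _ | ht | ht
    · exact ⟨_, .refl _, .inl hL⟩
    rcases ht with _ | ht | ht
    · refine ⟨c, .right (.right (.refl c)), .inr ?_⟩
      rw [leafSet_node (node a b), Set.union_sdiff_left, hab_c.symm.sdiff_eq_left]
    · exact ⟨t, .left ht, .inl rfl⟩
    · exact ⟨t, .right (.left ht), .inl rfl⟩
    · exact ⟨t, .right (.right ht), .inl rfl⟩

theorem URel.hasSplit_iff {S S' : RTree L} (h : URel S S') (hS : S.IsPhylo) {A B : Set L}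
    (hA : A ⊆ S.leafSet) (hB : B ⊆ S.leafSet) : HasSplit S A B ↔ HasSplit S' A B := by
  induction h with
  | rel _ _ h =>
    rcases h with h | h
    · exact h.hasSplit_iff hS hA hB
    · exact ⟨h.hasSplit hA hB, h.symm.hasSplit (leafSet_eq_of_perm h.perm ▸ hA)
        (leafSet_eq_of_perm h.perm ▸ hB)⟩
  | refl => rfl
  | symm _ _ h ih =>
    have e := leafSet_eq_of_perm (URel.perm h)
    exact (ih ((URel.perm h).nodup_iff.2 hS) (e ▸ hA) (e ▸ hB)).symm
  | trans _ _ _ h₁ _ ih₁ ih₂ =>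
    have e := leafSet_eq_of_perm (URel.perm h₁)
    exact (ih₁ hS hA hB).trans (ih₂ ((URel.perm h₁).nodup_iff.1 hS) (e ▸ hA) (e ▸ hB))

theorem IsSubtree.hasClade_iff {t T : RTree L} (ht : IsSubtree t T) (hT : T.IsPhylo)
    {A B : Set L} (hA : A.Nonempty) (hAt : A ⊆ t.leafSet) (hBt : B ⊆ t.leafSet) :
    HasClade t A B ↔ HasClade T A B :=
  ht.embeds.hasClade_iff hT hA hAt hBt

theorem IsSubtree.hasClade_iff_hasSplit {t T : RTree L} (ht : IsSubtree t T)
    (hT : T.IsPhylo) {a b c d : L} (ha : a ∈ t.leafSet) (hb : b ∈ t.leafSet)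
    (hc : c ∈ t.leafSet) (hd : d ∉ t.leafSet) :
    HasClade t {a, b} {c} ↔ HasSplit T {a, b} {c, d} := by
  have hab : ({a, b} : Set L) ⊆ t.leafSet := Set.pair_subset ha hb
  constructor
  · rintro ⟨u, hu, huA, huB⟩
    refine .inl ⟨u, hu.trans ht, huA, ?_⟩
    refine Set.disjoint_insert_right.2 ⟨Set.disjoint_singleton_right.1 huB, ?_⟩
    exact Set.disjoint_singleton_right.2 fun h => hd (hu.leafSet_subset h)
  · rintro (h | ⟨u, hu, huA, huB⟩)
    · exact (ht.hasClade_iff hT ⟨a, .inl rfl⟩ hab (Set.singleton_subset_iff.2 hc)).2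
        (h.anti_right (Set.singleton_subset_iff.2 (.inl rfl)))
    · have hcu : c ∈ u.leafSet := huA (.inl rfl)
      rcases IsSubtree.leafSet_subset_or_subset hT hu ht hcu hc with hut | htu
      · exact (hd (hut (huA (.inr rfl)))).elim
      · exact (Set.disjoint_left.1 huB (htu ha) (.inl rfl)).elim

def AgreeOnTriples (T₁ T₂ : RTree L) (X : Finset L) : Prop :=
  ∀ a ∈ X, ∀ b ∈ X, ∀ c ∈ X, HasClade T₁ {a, b} {c} ↔ HasClade T₂ {a, b} {c}

def AgreeOnQuartets (T₁ T₂ : RTree L) (X : Finset L) : Prop :=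
  ∀ a ∈ X, ∀ b ∈ X, ∀ c ∈ X, ∀ d ∈ X, HasSplit T₁ {a, b} {c, d} ↔ HasSplit T₂ {a, b} {c, d}

theorem agreeOnQuartets_of_embeds [DecidableEq L] {S₁ S₂ T₁ T₂ : RTree L}
    (hS₁ : S₁.IsPhylo) (hT₁ : T₁.IsPhylo) (hT₂ : T₂.IsPhylo) (h₁ : Embeds S₁ T₁)
    (h₂ : Embeds S₂ T₂) (hU : URel S₁ S₂) : AgreeOnQuartets T₁ T₂ S₁.leafList.toFinset := by
  simp only [AgreeOnQuartets, List.mem_toFinset]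
  intro a ha b hb c hc d hd
  have hab : ({a, b} : Set L) ⊆ S₁.leafSet := Set.pair_subset ha hb
  have hcd : ({c, d} : Set L) ⊆ S₁.leafSet := Set.pair_subset hc hd
  have e := leafSet_eq_of_perm hU.perm
  rw [← h₁.hasSplit_iff hT₁ ⟨a, .inl rfl⟩ ⟨c, .inl rfl⟩ hab hcd, hU.hasSplit_iff hS₁ hab hcd,
    h₂.hasSplit_iff hT₂ ⟨a, .inl rfl⟩ ⟨c, .inl rfl⟩ (e ▸ hab) (e ▸ hcd)]

section Filter

variable [DecidableEq L] {T₁ T₂ t₁ t₂ : RTree L} {X : Finset L}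

theorem AgreeOnTriples.filter (h : AgreeOnTriples T₁ T₂ X) (hT₁ : T₁.IsPhylo)
    (hT₂ : T₂.IsPhylo) (ht₁ : IsSubtree t₁ T₁) (ht₂ : IsSubtree t₂ T₂)
    (hL : t₁.leafSet = t₂.leafSet) : AgreeOnTriples t₁ t₂ {x ∈ X | x ∈ t₁.leafList} := by
  simp only [AgreeOnTriples, Finset.mem_filter]
  rintro a ⟨ha, ha'⟩ b ⟨hb, hb'⟩ c ⟨hc, hc'⟩
  have hab : ({a, b} : Set L) ⊆ t₁.leafSet := Set.pair_subset ha' hb'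
  have hc₁ : ({c} : Set L) ⊆ t₁.leafSet := Set.singleton_subset_iff.2 hc'
  rw [ht₁.hasClade_iff hT₁ ⟨a, .inl rfl⟩ hab hc₁,
    ht₂.hasClade_iff hT₂ ⟨a, .inl rfl⟩ (hL ▸ hab) (hL ▸ hc₁)]
  exact h a ha b hb c hc

theorem AgreeOnQuartets.filter (h : AgreeOnQuartets T₁ T₂ X) (hT₁ : T₁.IsPhylo)
    (hT₂ : T₂.IsPhylo) (ht₁ : IsSubtree t₁ T₁) (ht₂ : IsSubtree t₂ T₂)
    (hL : t₁.leafSet = t₂.leafSet) : AgreeOnQuartets t₁ t₂ {x ∈ X | x ∈ t₁.leafList} := by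
  simp only [AgreeOnQuartets, Finset.mem_filter]
  rintro a ⟨ha, ha'⟩ b ⟨hb, hb'⟩ c ⟨hc, hc'⟩ d ⟨hd, hd'⟩
  have hab : ({a, b} : Set L) ⊆ t₁.leafSet := Set.pair_subset ha' hb'
  have hcd : ({c, d} : Set L) ⊆ t₁.leafSet := Set.pair_subset hc' hd'
  rw [ht₁.embeds.hasSplit_iff hT₁ ⟨a, .inl rfl⟩ ⟨c, .inl rfl⟩ hab hcd,
    ht₂.embeds.hasSplit_iff hT₂ ⟨a, .inl rfl⟩ ⟨c, .inl rfl⟩ (hL ▸ hab) (hL ▸ hcd)]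
  exact h a ha b hb c hc d hd

theorem AgreeOnQuartets.agreeOnTriples_filter (h : AgreeOnQuartets T₁ T₂ X)
    (hT₁ : T₁.IsPhylo) (hT₂ : T₂.IsPhylo) (ht₁ : IsSubtree t₁ T₁) (ht₂ : IsSubtree t₂ T₂)
    (hL : t₁.leafSet = t₂.leafSet) {d : L} (hd : d ∈ X) (hdt : d ∉ t₁.leafSet) :
    AgreeOnTriples t₁ t₂ {x ∈ X | x ∈ t₁.leafList} := by
  simp only [AgreeOnTriples, Finset.mem_filter]
  rintro a ⟨ha, ha'⟩ b ⟨hb, hb'⟩ c ⟨hc, hc'⟩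
  rw [ht₁.hasClade_iff_hasSplit hT₁ ha' hb' hc' hdt,
    ht₂.hasClade_iff_hasSplit hT₂ (hL ▸ ha') (hL ▸ hb') (hL ▸ hc') (hL ▸ hdt)]
  exact h a ha b hb c hc d hd

theorem card_filter_mem_node {l r : RTree L} (hp : (node l r).IsPhylo) (X : Finset L) :
    #{x ∈ X | x ∈ (node l r).leafList} =
      #{x ∈ X | x ∈ l.leafList} + #{x ∈ X | x ∈ r.leafList} := by
  simp only [leafList, List.mem_append, Finset.filter_or]
  refine Finset.card_union_of_disjoint (Finset.disjoint_filter.2 fun x _ hl hr => ?_)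
  exact (isPhylo_node.1 hp).2.2.ne_of_mem hl hr rfl

end Filter

theorem AgreeOnTriples.mem_of_mem_left_of_mem_right {T u l r : RTree L} {X : Finset L}
    (h : AgreeOnTriples T (node l r) X) (hp : (node l r).IsPhylo) (hu : IsSubtree u T)
    (hX : ∀ x ∈ X, x ∈ (node l r).leafSet) {a b c : L} (ha : a ∈ X) (hau : a ∈ u.leafSet)
    (hal : a ∈ l.leafSet) (hb : b ∈ X) (hbu : b ∈ u.leafSet) (hbr : b ∈ r.leafSet)
    (hc : c ∈ X) : c ∈ u.leafSet := by
  by_contra hcu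
  refine not_hasClade_of_mem_left_of_mem_right hp (Set.mem_insert _ _) hal
    (Set.mem_insert_of_mem _ (Set.mem_singleton _)) hbr (Set.mem_singleton _) (hX c hc) ?_
  exact (h a ha b hb c hc).1 ⟨u, hu, Set.pair_subset hau hbu, Set.disjoint_singleton_right.2 hcu⟩

theorem AgreeOnQuartets.mem_or_mem_of_mem_left_of_mem_right {T u l r : RTree L}
    {X : Finset L} (h : AgreeOnQuartets T (node l r) X) (hp : (node l r).IsPhylo)
    (hu : IsSubtree u T) {a b c d : L} (ha : a ∈ X) (hau : a ∈ u.leafSet)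
    (hal : a ∈ l.leafSet) (hb : b ∈ X) (hbu : b ∈ u.leafSet) (hbr : b ∈ r.leafSet)
    (hc : c ∈ X) (hcl : c ∈ l.leafSet) (hd : d ∈ X) (hdr : d ∈ r.leafSet) :
    c ∈ u.leafSet ∨ d ∈ u.leafSet := by
  by_contra! hcd
  have hs : HasSplit T {a, b} {c, d} := .inl ⟨u, hu, Set.pair_subset hau hbu,
    Set.disjoint_insert_right.2 ⟨hcd.1, Set.disjoint_singleton_right.2 hcd.2⟩⟩
  rcases (h a ha b hb c hc d hd).1 hs with hs | hs
  · exact not_hasClade_of_mem_left_of_mem_right hp (Set.mem_insert _ _) hal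
      (Set.mem_insert_of_mem _ (Set.mem_singleton _)) hbr (Set.mem_insert _ _) (by simp [hcl]) hs
  · exact not_hasClade_of_mem_left_of_mem_right hp (Set.mem_insert _ _) hcl
      (Set.mem_insert_of_mem _ (Set.mem_singleton _)) hdr (Set.mem_insert _ _) (by simp [hal]) hs

def quad (B : Fin 4 → RTree L) : RTree L := node (node (B 0) (B 1)) (node (B 2) (B 3))

theorem isSubtree_quad (B : Fin 4 → RTree L) (i : Fin 4) : IsSubtree (B i) (quad B) := by
  fin_cases i
  exacts [.left (.left (.refl _)), .left (.right (.refl _)), .right (.left (.refl _)),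
    .right (.right (.refl _))]

theorem quad_comp_swap (C : Fin 4 → RTree L) :
    quad (C ∘ Equiv.swap 1 2) = node (node (C 0) (C 2)) (node (C 1) (C 3)) := by
  simp [quad, Equiv.swap_apply_of_ne_of_ne]

theorem isSubtree_quad_comp_swap (C : Fin 4 → RTree L) (i : Fin 4) :
    IsSubtree (C i) (quad (C ∘ Equiv.swap 1 2)) := by
  simpa using isSubtree_quad (C ∘ Equiv.swap 1 2) (Equiv.swap 1 2 i)

theorem card_eq_card_filter_mem [DecidableEq L] {T : RTree L} {X : Finset L}
    (hX : ↑X ⊆ T.leafSet) : #X = #{x ∈ X | x ∈ T.leafList} := by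
  rw [Finset.filter_true_of_mem (p := (· ∈ T.leafList)) fun x hx => hX hx]

theorem leafSet_quad_comp_swap {B C : Fin 4 → RTree L}
    (hBC : ∀ i, (B i).leafSet = (C i).leafSet) :
    (quad (C ∘ Equiv.swap 1 2)).leafSet = (quad B).leafSet := by
  rw [quad_comp_swap]
  simp only [quad, leafSet_node, hBC, Set.union_union_union_comm]

section FourBlocks

variable [DecidableEq L] {B C : Fin 4 → RTree L} {X : Finset L}

theorem card_le_of_agreeOnTriples_quad {m : ℕ} (hp₁ : (quad B).IsPhylo)
    (hp₂ : (quad (C ∘ Equiv.swap 1 2)).IsPhylo) (hBC : ∀ i, (B i).leafSet = (C i).leafSet)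
    (hm : ∀ i (Y : Finset L), ↑Y ⊆ (B i).leafSet → AgreeOnTriples (B i) (C i) Y → #Y ≤ m)
    (hX : ↑X ⊆ (quad B).leafSet) (h : AgreeOnTriples (quad B) (quad (C ∘ Equiv.swap 1 2)) X) :
    #X ≤ 2 * m := by
  set n : RTree L → ℕ := fun t => #{x ∈ X | x ∈ t.leafList}
  have hn : ∀ i, n (B i) ≤ m := fun i =>
    hm i _ (fun x hx => (Finset.mem_filter.1 hx).2)
      (h.filter hp₁ hp₂ (isSubtree_quad B i) (isSubtree_quad_comp_swap C i) (hBC i))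
  have pick : ∀ t, n t ≠ 0 → ∃ a ∈ X, a ∈ t.leafSet := fun t ht =>
    let ⟨a, haX, ha⟩ := Finset.filter_nonempty_iff.1 (Finset.card_ne_zero.1 ht)
    ⟨a, haX, ha⟩
  have hL := leafSet_quad_comp_swap hBC
  obtain ⟨hp₀₁, hp₂₃, hdisj⟩ := isPhylo_node.1 hp₁
  rw [quad_comp_swap] at hp₂ hL h
  have hX₂ : ∀ x ∈ X, x ∈ (node (node (C 0) (C 2)) (node (C 1) (C 3))).leafSet :=
    fun x hx => hL ▸ hX hx
  -- Leaves of the sibling blocks `B 0`, `B 1` (or `B 2`, `B 3`) are separated at the root of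
  -- the other tree.
  have h₀₁ : n (B 0) = 0 ∨ n (B 1) = 0 ∨ n (node (B 2) (B 3)) = 0 := by
    by_contra! hne
    obtain ⟨a, haX, ha⟩ := pick _ hne.1
    obtain ⟨b, hbX, hb⟩ := pick _ hne.2.1
    obtain ⟨c, hcX, hc⟩ := pick _ hne.2.2
    refine hdisj.ne_of_mem ?_ hc rfl
    exact h.mem_of_mem_left_of_mem_right hp₂ (.left (.refl _)) hX₂ haX (by simp [ha])
      (by simp [← hBC, ha]) hbX (by simp [hb]) (by simp [← hBC, hb]) hcX
  have h₂₃ : n (B 2) = 0 ∨ n (B 3) = 0 ∨ n (node (B 0) (B 1)) = 0 := by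
    by_contra! hne
    obtain ⟨a, haX, ha⟩ := pick _ hne.1
    obtain ⟨b, hbX, hb⟩ := pick _ hne.2.1
    obtain ⟨c, hcX, hc⟩ := pick _ hne.2.2
    refine hdisj.ne_of_mem hc ?_ rfl
    exact h.mem_of_mem_left_of_mem_right hp₂ (.right (.refl _)) hX₂ haX (by simp [ha])
      (by simp [← hBC, ha]) hbX (by simp [hb]) (by simp [← hBC, hb]) hcX
  have hcard : #X = n (node (B 0) (B 1)) + n (node (B 2) (B 3)) :=
    (card_eq_card_filter_mem hX).trans (card_filter_mem_node hp₁ X)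
  have hcard₀₁ : n (node (B 0) (B 1)) = n (B 0) + n (B 1) := card_filter_mem_node hp₀₁ X
  have hcard₂₃ : n (node (B 2) (B 3)) = n (B 2) + n (B 3) := card_filter_mem_node hp₂₃ X
  have := hn 0; have := hn 1; have := hn 2; have := hn 3
  omega

theorem card_le_of_agreeOnQuartets_quad {m u : ℕ} (hp₁ : (quad B).IsPhylo)
    (hp₂ : (quad (C ∘ Equiv.swap 1 2)).IsPhylo) (hBC : ∀ i, (B i).leafSet = (C i).leafSet)
    (hm : ∀ i (Y : Finset L), ↑Y ⊆ (B i).leafSet → AgreeOnTriples (B i) (C i) Y → #Y ≤ m)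
    (hu : ∀ i (Y : Finset L), ↑Y ⊆ (B i).leafSet → AgreeOnQuartets (B i) (C i) Y → #Y ≤ u)
    (hX : ↑X ⊆ (quad B).leafSet)
    (h : AgreeOnQuartets (quad B) (quad (C ∘ Equiv.swap 1 2)) X) :
    #X ≤ max u (3 * m) := by
  set n : RTree L → ℕ := fun t => #{x ∈ X | x ∈ t.leafList}
  have hnu : ∀ i, n (B i) ≤ u := fun i =>
    hu i _ (fun x hx => (Finset.mem_filter.1 hx).2)
      (h.filter hp₁ hp₂ (isSubtree_quad B i) (isSubtree_quad_comp_swap C i) (hBC i))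
  have hnm : ∀ i, n (B i) ≠ #X → n (B i) ≤ m := fun i hi => by
    obtain ⟨d, hdX, hd⟩ : ∃ d ∈ X, d ∉ (B i).leafList := by
      simpa using mt Finset.card_filter_eq_iff.2 hi
    exact hm i _ (fun x hx => (Finset.mem_filter.1 hx).2)
      (h.agreeOnTriples_filter hp₁ hp₂ (isSubtree_quad B i) (isSubtree_quad_comp_swap C i)
        (hBC i) hdX hd)
  have pick : ∀ t, n t ≠ 0 → ∃ a ∈ X, a ∈ t.leafSet := fun t ht =>
    let ⟨a, haX, ha⟩ := Finset.filter_nonempty_iff.1 (Finset.card_ne_zero.1 ht)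
    ⟨a, haX, ha⟩
  obtain ⟨hp₀₁, hp₂₃, hdisj⟩ := isPhylo_node.1 hp₁
  rw [quad_comp_swap] at hp₂ h
  -- `quad B` displays `a₀a₁|a₂a₃` for leaves `aᵢ` of `B i`, the other tree does not.
  have h₄ : n (B 0) = 0 ∨ n (B 1) = 0 ∨ n (B 2) = 0 ∨ n (B 3) = 0 := by
    by_contra! hne
    obtain ⟨a₀, ha₀X, ha₀⟩ := pick _ hne.1
    obtain ⟨a₁, ha₁X, ha₁⟩ := pick _ hne.2.1
    obtain ⟨a₂, ha₂X, ha₂⟩ := pick _ hne.2.2.1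
    obtain ⟨a₃, ha₃X, ha₃⟩ := pick _ hne.2.2.2
    rcases h.mem_or_mem_of_mem_left_of_mem_right hp₂ (.left (.refl _)) ha₀X (by simp [ha₀])
      (by simp [← hBC, ha₀]) ha₁X (by simp [ha₁]) (by simp [← hBC, ha₁]) ha₂X
      (by simp [← hBC, ha₂]) ha₃X (by simp [← hBC, ha₃]) with h | h
    · exact hdisj.ne_of_mem h (by simp [ha₂]) rfl
    · exact hdisj.ne_of_mem h (by simp [ha₃]) rfl
  have hcard : #X = n (node (B 0) (B 1)) + n (node (B 2) (B 3)) :=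
    (card_eq_card_filter_mem hX).trans (card_filter_mem_node hp₁ X)
  have hcard₀₁ : n (node (B 0) (B 1)) = n (B 0) + n (B 1) := card_filter_mem_node hp₀₁ X
  have hcard₂₃ : n (node (B 2) (B 3)) = n (B 2) + n (B 3) := card_filter_mem_node hp₂₃ X
  have := hnu 0; have := hnu 1; have := hnu 2; have := hnu 3
  have := hnm 0; have := hnm 1; have := hnm 2; have := hnm 3
  omega

end FourBlocks

end RTree

open RTree

theorem leafList_buildL : ∀ {m : ℕ} {S : List ℕ}, S.length = 2 ^ m → (buildL m S).leafList = S
  | 0, S, h => by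
    obtain ⟨a, rfl⟩ := List.length_eq_one_iff.1 h
    rfl
  | m + 1, S, h => by
    have hm : 2 ^ m ≤ S.length := by rw [h, pow_succ]; omega
    simp only [buildL, leafList]
    rw [leafList_buildL (by simpa using hm),
      leafList_buildL (by rw [List.length_drop, h, pow_succ]; omega),
      List.take_append_drop]

theorem buildL_add_two {m : ℕ} {S₀ S₁ S₂ S₃ : List ℕ} (h₀ : S₀.length = 2 ^ m)
    (h₁ : S₁.length = 2 ^ m) (h₂ : S₂.length = 2 ^ m) :
    buildL (m + 2) (S₀ ++ S₁ ++ S₂ ++ S₃) =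
      node (node (buildL m S₀) (buildL m S₁)) (node (buildL m S₂) (buildL m S₃)) := by
  have h₀₁ : (S₀ ++ S₁).length = 2 ^ (m + 1) := by rw [List.length_append, h₀, h₁, pow_succ]; ring
  rw [List.append_assoc (S₀ ++ S₁)]
  simp only [buildL]
  rw [List.take_left' h₀₁, List.drop_left' h₀₁, List.take_left' h₀, List.drop_left' h₀,
    List.take_left' h₂, List.drop_left' h₂]

theorem swapList_succ_append {k : ℕ} {S₀ S₁ S₂ S₃ : List ℕ} (h₀ : S₀.length = 4 ^ k)
    (h₁ : S₁.length = 4 ^ k) (h₂ : S₂.length = 4 ^ k) :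
    swapList (k + 1) (S₀ ++ S₁ ++ S₂ ++ S₃) =
      swapList k S₀ ++ swapList k S₂ ++ swapList k S₁ ++ swapList k S₃ := by
  simp only [swapList, List.append_assoc]
  rw [List.take_left' h₀, List.drop_left' h₀, List.take_left' h₁, List.drop_left' h₁,
    List.take_left' h₂, List.drop_left' h₂]

theorem swapList_perm : ∀ (k : ℕ) (S : List ℕ), (swapList k S).Perm S
  | 0, _ => .refl _
  | k + 1, S => by
    set a := S.take (4 ^ k)
    set b := (S.drop (4 ^ k)).take (4 ^ k)
    set c := ((S.drop (4 ^ k)).drop (4 ^ k)).take (4 ^ k)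
    set d := ((S.drop (4 ^ k)).drop (4 ^ k)).drop (4 ^ k)
    have hS : a ++ b ++ c ++ d = S := by
      simp only [a, b, c, d, List.append_assoc, List.take_append_drop]
    have hmid : (a ++ c ++ b ++ d).Perm S := hS ▸ by
      simpa only [List.append_assoc, List.perm_append_left_iff] using
        List.perm_append_comm_assoc c b d
    exact ((((swapList_perm k a).append (swapList_perm k c)).append (swapList_perm k b)).append
      (swapList_perm k d)).trans hmid

theorem range'_four_mul (s n : ℕ) :
    List.range' s (4 * n) = List.range' s n ++ List.range' (s + n) n ++
      List.range' (s + 2 * n) n ++ List.range' (s + 3 * n) n := by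
  rw [show 4 * n = n + n + n + n by ring, ← List.range'_append_1, ← List.range'_append_1,
    ← List.range'_append_1, two_mul, show 3 * n = n + n + n by ring]

def orderedTree (k s : ℕ) : RTree ℕ := buildL (2 * k) (List.range' s (4 ^ k))

def swappedTree (k s : ℕ) : RTree ℕ := buildL (2 * k) (swapList k (List.range' s (4 ^ k)))

theorem length_range'_four_pow (k s : ℕ) : (List.range' s (4 ^ k)).length = 2 ^ (2 * k) := by
  rw [List.length_range', pow_mul]; norm_num

theorem leafList_orderedTree (k s : ℕ) :
    (orderedTree k s).leafList = List.range' s (4 ^ k) :=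
  leafList_buildL (length_range'_four_pow k s)

theorem leafList_swappedTree_perm (k s : ℕ) :
    (swappedTree k s).leafList.Perm (List.range' s (4 ^ k)) := by
  rw [swappedTree,
    leafList_buildL ((swapList_perm k _).length_eq.trans (length_range'_four_pow k s))]
  exact swapList_perm k _

theorem isPhylo_orderedTree (k s : ℕ) : (orderedTree k s).IsPhylo := by
  rw [IsPhylo, leafList_orderedTree]; exact List.nodup_range'

theorem isPhylo_swappedTree (k s : ℕ) : (swappedTree k s).IsPhylo :=
  (leafList_swappedTree_perm k s).nodup_iff.2 List.nodup_range'

theorem leafSet_swappedTree (k s : ℕ) :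
    (swappedTree k s).leafSet = (orderedTree k s).leafSet :=
  leafSet_eq_of_perm
    ((leafList_swappedTree_perm k s).trans (.of_eq (leafList_orderedTree k s).symm))

theorem orderedTree_succ (k s : ℕ) :
    orderedTree (k + 1) s = quad fun i : Fin 4 => orderedTree k (s + i * 4 ^ k) := by
  have h := length_range'_four_pow k
  rw [orderedTree, pow_succ', range'_four_mul, show 2 * (k + 1) = 2 * k + 2 by ring,
    buildL_add_two (h _) (h _) (h _)]
  simp [quad, orderedTree]

theorem swappedTree_succ (k s : ℕ) :
    swappedTree (k + 1) s =
      quad ((fun i : Fin 4 => swappedTree k (s + i * 4 ^ k)) ∘ Equiv.swap 1 2) := by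
  have h t : (swapList k (List.range' t (4 ^ k))).length = 2 ^ (2 * k) :=
    (swapList_perm k _).length_eq.trans (length_range'_four_pow k t)
  have h' t : (List.range' t (4 ^ k)).length = 4 ^ k := List.length_range'
  rw [swappedTree, pow_succ', range'_four_mul, swapList_succ_append (h' _) (h' _) (h' _),
    show 2 * (k + 1) = 2 * k + 2 by ring, buildL_add_two (h _) (h _) (h _), quad_comp_swap]
  simp [swappedTree]

theorem card_le_one_of_subset_orderedTree_zero {s : ℕ} {X : Finset ℕ}
    (hX : ↑X ⊆ (orderedTree 0 s).leafSet) : #X ≤ 1 := by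
  have hL : (orderedTree 0 s).leafSet = {s} := by
    ext; simp [leafSet, leafList_orderedTree]
  exact Finset.card_le_one.2 fun a ha b hb => (hL ▸ hX ha).trans (hL ▸ hX hb).symm

theorem card_le_of_agreeOnTriples_orderedTree :
    ∀ (k s : ℕ) {X : Finset ℕ}, ↑X ⊆ (orderedTree k s).leafSet →
      AgreeOnTriples (orderedTree k s) (swappedTree k s) X → #X ≤ 2 ^ k
  | 0, _, _, hX, _ => card_le_one_of_subset_orderedTree_zero hX
  | k + 1, s, X, hX, h => by
    rw [orderedTree_succ, swappedTree_succ] at h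
    rw [orderedTree_succ] at hX
    rw [pow_succ']
    exact card_le_of_agreeOnTriples_quad (orderedTree_succ k s ▸ isPhylo_orderedTree _ _)
      (swappedTree_succ k s ▸ isPhylo_swappedTree _ _) (fun _ => (leafSet_swappedTree k _).symm)
      (fun _ _ hY hY' => card_le_of_agreeOnTriples_orderedTree k _ hY hY') hX h

theorem card_le_of_agreeOnQuartets_orderedTree :
    ∀ (k s : ℕ) {X : Finset ℕ}, ↑X ⊆ (orderedTree k s).leafSet →
      AgreeOnQuartets (orderedTree k s) (swappedTree k s) X → #X ≤ 3 * 2 ^ (k - 1)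
  | 0, _, _, hX, _ => (card_le_one_of_subset_orderedTree_zero hX).trans (by norm_num)
  | k + 1, s, X, hX, h => by
    rw [orderedTree_succ, swappedTree_succ] at h
    rw [orderedTree_succ] at hX
    refine (card_le_of_agreeOnQuartets_quad (orderedTree_succ k s ▸ isPhylo_orderedTree _ _)
      (swappedTree_succ k s ▸ isPhylo_swappedTree _ _) (fun _ => (leafSet_swappedTree k _).symm)
      (fun _ _ hY hY' => card_le_of_agreeOnTriples_orderedTree k _ hY hY')
      (fun _ _ hY hY' => card_le_of_agreeOnQuartets_orderedTree k _ hY hY') hX h).trans ?_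
    exact max_le (Nat.mul_le_mul_left 3 (Nat.pow_le_pow_right (by norm_num) (by omega))) le_rfl

theorem stmt_17_general (k : ℕ) :
    RTree.umast (buildL (2 * k) (List.range' 1 (4 ^ k)))
        (buildL (2 * k) (swapList k (List.range' 1 (4 ^ k)))) ≤ 3 * 2 ^ (k - 1) := by
  refine csSup_le' ?_
  rintro n ⟨S₁, S₂, hS₁, -, h₁, h₂, hU, rfl⟩
  rw [numLeaves, ← List.toFinset_card_of_nodup hS₁]
  exact card_le_of_agreeOnQuartets_orderedTree k 1
    (fun x hx => h₁.leafSet_subset (List.mem_toFinset.1 hx))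
    (agreeOnQuartets_of_embeds hS₁ (isPhylo_orderedTree k 1) (isPhylo_swappedTree k 1)
      h₁ h₂ hU)

/-- For `k > 0`, let `T₁` be the unrooted binary phylogenetic tree
obtained by suppressing the root of the rooted balanced binary tree of height `2k`
whose leaves from left to right are `1, 2, …, 4^k`, and let `T₂` be obtained likewise
from the rooted balanced binary tree with leaf sequence `swap(1, 2, …, 4^k)`.  Then
`T₁` and `T₂` have no agreement subtree with more than `3·2^(k-1)` leaves,
i.e. `mast{T₁,T₂} ≤ 3·2^(k-1)`. -/
theorem stmt_17 (k : ℕ) (hk : 0 < k) :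
    RTree.umast (buildL (2 * k) (List.range' 1 (4 ^ k)))
        (buildL (2 * k) (swapList k (List.range' 1 (4 ^ k)))) ≤ 3 * 2 ^ (k - 1) :=
  stmt_17_general k
end
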